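/- Key covariance identity underlying eSURE: with x deterministic in ℝ^N, y₁ = x + n₁, y₂ = y₁ + z as above (n₁ ~ N(0,σ₁²I), z ~ N(0,σ_z²I) independent), and h C¹ with bounded derivative, E[n₁ᵀ h(y₂)] = σ₁² · E[∑ᵢ ∂hᵢ(y₂)/∂(y₂)ᵢ]. -/

import Mathlib

/-!
Conditionally on `z`, the noise `n₁` is still `N(0, σ₁² I)`, so by Fubini it suffices to prove
Stein's identity `E[n₁ᵢ g(c + n₁)] = σ₁² E[∂ᵢ g(c + n₁)]` for every fixed shift `c = x + z`.
Splitting coordinate `i` off the product measure reduces this to the one-dimensional identity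
`E[(X - m) g(X)] = v E[g'(X)]` for `X ~ N(m, v)`, which is integration by parts against the
Gaussian density `φ`, since `-v φ` is an antiderivative of `(x - m) φ`. All integrands are
integrable because `h` is Lipschitz and Gaussian vectors have finite second moments.
-/

open MeasureTheory ProbabilityTheory Real
open scoped NNReal ENNReal

lemma LipschitzWith.memLp_comp {α E F : Type*} [MeasurableSpace α] {μ : Measure α}
    [IsFiniteMeasure μ] [NormedAddCommGroup E] [NormedAddCommGroup F] {K : ℝ≥0} {g : E → F}
    (hg : LipschitzWith K g) {f : α → E} {p : ℝ≥0∞} (hf : MemLp f p μ) :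
    MemLp (fun a => g (f a)) p μ := by
  have hg₀ : LipschitzWith K (fun e => g e - g 0) := by
    simpa using hg.sub (LipschitzWith.const (g 0))
  convert (hg₀.comp_memLp (by simp) hf).add (memLp_const (g 0)) using 1
  ext a; simp

lemma memLp_id_pi_gaussianReal {ι : Type*} [Fintype ι] (m : ι → ℝ) (v : ι → ℝ≥0)
    {p : ℝ≥0∞} (hp : p ≠ ∞) : MemLp id p (Measure.pi fun i => gaussianReal (m i) (v i)) :=
  memLp_pi_iff.2 fun i =>
    (memLp_id_gaussianReal' p hp).comp_measurePreserving (measurePreserving_eval _ i)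

lemma ContinuousLinearMap.norm_apply_single_apply_le {ι : Type*} [Fintype ι] [DecidableEq ι]
    (L : (ι → ℝ) →L[ℝ] ι → ℝ) (i : ι) : ‖L (Pi.single i 1) i‖ ≤ ‖L‖ :=
  calc ‖L (Pi.single i 1) i‖ ≤ ‖L (Pi.single i 1)‖ := norm_le_pi_norm _ i
    _ ≤ ‖L‖ * ‖(Pi.single i 1 : ι → ℝ)‖ := L.le_opNorm _
    _ = ‖L‖ := by rw [Pi.norm_single, norm_one, mul_one]

section Integrability

variable {α ι : Type*} [Fintype ι] [MeasurableSpace α] {μ : Measure α} [IsFiniteMeasure μ]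
  {h : (ι → ℝ) → ι → ℝ} {K : ℝ≥0}

lemma integrable_eval_mul_eval_comp {X Y : α → ι → ℝ} (hX : MemLp X 2 μ) (hY : MemLp Y 2 μ)
    (hh : LipschitzWith K h) (i : ι) : Integrable (fun a => X a i * h (Y a) i) μ :=
  (hX.eval i).integrable_mul ((hh.memLp_comp hY).eval i)

lemma integrable_fderiv_apply_single_comp [DecidableEq ι] {Y : α → ι → ℝ}
    (hY : AEMeasurable Y μ) (hh : LipschitzWith K h) (i : ι) :
    Integrable (fun a => fderiv ℝ h (Y a) (Pi.single i 1) i) μ :=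
  .of_bound (((measurable_pi_apply i).comp
      (measurable_fderiv_apply_const ℝ h _)).comp_aemeasurable hY).aestronglyMeasurable K
    (ae_of_all _ fun _ => (ContinuousLinearMap.norm_apply_single_apply_le _ i).trans
      (norm_fderiv_le_of_lipschitz ℝ hh))

end Integrability

section InsertNth

variable {n : ℕ} {α : Fin (n + 1) → Type*} [∀ j, MeasurableSpace (α j)]
  {μ : ∀ j, Measure (α j)} [∀ j, SigmaFinite (μ j)] (i : Fin (n + 1))
  {E : Type*} [NormedAddCommGroup E] {G : (∀ j, α j) → E}

lemma MeasureTheory.Integrable.comp_insertNth (hG : Integrable G (Measure.pi μ)) :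
    Integrable (fun q : α i × (∀ j, α (i.succAbove j)) => G (i.insertNth q.1 q.2))
      ((μ i).prod (Measure.pi fun j => μ (i.succAbove j))) :=
  ((measurePreserving_piFinSuccAbove μ i).symm.integrable_comp_emb
    (MeasurableEquiv.piFinSuccAbove α i).symm.measurableEmbedding).2 hG

lemma integral_pi_eq_integral_integral_insertNth [NormedSpace ℝ E]
    (hG : Integrable G (Measure.pi μ)) :
    ∫ y, G y ∂Measure.pi μ
      = ∫ w, ∫ t, G (i.insertNth t w) ∂μ i ∂Measure.pi fun j => μ (i.succAbove j) := by
  rw [← (measurePreserving_piFinSuccAbove μ i).symm.integral_comp' G]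
  exact integral_prod_symm _ (hG.comp_insertNth i)

end InsertNth

lemma hasDerivAt_gaussianPDFReal (m : ℝ) (v : ℝ≥0) (x : ℝ) :
    HasDerivAt (gaussianPDFReal m v) (-((x - m) / v) * gaussianPDFReal m v x) x := by
  have hexp : HasDerivAt (fun y => -(y - m) ^ 2 / (2 * v)) (-((x - m) / v)) x :=
    ((((hasDerivAt_id' x).sub_const m).pow 2).neg.div_const (2 * (v : ℝ))).congr_deriv (by ring)
  rw [gaussianPDFReal_def]
  exact (hexp.exp.const_mul _).congr_deriv (by ring)

lemma integrable_gaussianPDFReal_mul_iff {m : ℝ} {v : ℝ≥0} (hv : v ≠ 0) {f : ℝ → ℝ} :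
    Integrable (fun x => gaussianPDFReal m v x * f x) ↔ Integrable f (gaussianReal m v) := by
  rw [gaussianReal_of_var_ne_zero _ hv, integrable_withDensity_iff_integrable_smul'
    (measurable_gaussianPDF m v) (ae_of_all _ fun _ => gaussianPDF_lt_top)]
  simp [toReal_gaussianPDF]

theorem integral_sub_mul_gaussianReal_eq (m : ℝ) (v : ℝ≥0) {g g' : ℝ → ℝ}
    (hg : ∀ x, HasDerivAt g (g' x) x) (hg_int : Integrable g (gaussianReal m v))
    (hg'_int : Integrable g' (gaussianReal m v))
    (hxg_int : Integrable (fun x => (x - m) * g x) (gaussianReal m v)) :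
    ∫ x, (x - m) * g x ∂gaussianReal m v = v * ∫ x, g' x ∂gaussianReal m v := by
  rcases eq_or_ne v 0 with rfl | hv
  · simp [gaussianReal_zero_var]
  set φ := gaussianPDFReal m v
  have hw : ∀ x, HasDerivAt (fun x => -(v : ℝ) * φ x) ((x - m) * φ x) x := fun x =>
    ((hasDerivAt_gaussianPDFReal m v x).const_mul _).congr_deriv (by simp only [φ]; field_simp)
  have hint {f : ℝ → ℝ} (c : ℝ) (hf : Integrable f (gaussianReal m v)) :
      Integrable (fun x => c * (φ x * f x)) :=
    ((integrable_gaussianPDFReal_mul_iff hv).2 hf).const_mul c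
  have ibp : ∫ x, g x * ((x - m) * φ x) = -∫ x, g' x * (-(v : ℝ) * φ x) := by
    refine integral_mul_deriv_eq_deriv_mul_of_integrable (fun x _ => hg x) (fun x _ => hw x)
      ?_ ?_ ?_
    · exact (hint 1 hxg_int).congr (ae_of_all _ fun x => by simp only [Pi.mul_apply]; ring)
    · exact (hint (-v) hg'_int).congr (ae_of_all _ fun x => by simp only [Pi.mul_apply]; ring)
    · exact (hint (-v) hg_int).congr (ae_of_all _ fun x => by simp only [Pi.mul_apply]; ring)
  simp_rw [integral_gaussianReal_eq_integral_smul hv, smul_eq_mul]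
  calc ∫ x, φ x * ((x - m) * g x) = ∫ x, g x * ((x - m) * φ x) := by congr 1; ext x; ring
    _ = -∫ x, g' x * (-(v : ℝ) * φ x) := ibp
    _ = v * ∫ x, φ x * g' x := by
      rw [← integral_const_mul, ← integral_neg]; congr 1; ext x; ring

theorem integral_eval_sub_mul_pi_gaussianReal {n : ℕ} (m : Fin n → ℝ) (v : Fin n → ℝ≥0)
    (i : Fin n) {F : (Fin n → ℝ) → ℝ} {F' : (Fin n → ℝ) → (Fin n → ℝ) →L[ℝ] ℝ}
    (hF : ∀ y, HasFDerivAt F (F' y) y)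
    (hF_int : Integrable F (Measure.pi fun j => gaussianReal (m j) (v j)))
    (hF'_int : Integrable (fun y => F' y (Pi.single i 1))
      (Measure.pi fun j => gaussianReal (m j) (v j)))
    (hyF_int : Integrable (fun y => (y i - m i) * F y)
      (Measure.pi fun j => gaussianReal (m j) (v j))) :
    ∫ y, (y i - m i) * F y ∂(Measure.pi fun j => gaussianReal (m j) (v j))
      = v i * ∫ y, F' y (Pi.single i 1) ∂(Measure.pi fun j => gaussianReal (m j) (v j)) := by
  obtain ⟨k, rfl⟩ := Nat.exists_eq_add_one_of_ne_zero i.pos.ne'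
  rw [integral_pi_eq_integral_integral_insertNth i hyF_int,
    integral_pi_eq_integral_integral_insertNth i hF'_int, ← integral_const_mul]
  refine integral_congr_ae ?_
  filter_upwards [(hF_int.comp_insertNth i).prod_left_ae, (hF'_int.comp_insertNth i).prod_left_ae,
    (hyF_int.comp_insertNth i).prod_left_ae] with w hg hg' hxg
  have hderiv (t : ℝ) :
      HasDerivAt (fun t => F (i.insertNth t w)) (F' (i.insertNth t w) (Pi.single i 1)) t := by
    have := (hF _).comp_hasDerivAt t (hasDerivAt_update (i.insertNth 0 w) i t)
    simpa only [Function.comp_def, Fin.update_insertNth] using this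
  simp only [Fin.insertNth_apply_same] at hxg ⊢
  exact integral_sub_mul_gaussianReal_eq (m i) (v i) hderiv hg hg' hxg

theorem integral_sum_mul_pi_gaussianReal {n : ℕ} (v : ℝ≥0) (c : Fin n → ℝ)
    {h : (Fin n → ℝ) → Fin n → ℝ} (hd : Differentiable ℝ h) {K : ℝ≥0} (hh : LipschitzWith K h) :
    ∫ y, ∑ i, y i * h (c + y) i ∂(Measure.pi fun _ => gaussianReal 0 v)
      = v * ∫ y, ∑ i, fderiv ℝ h (c + y) (Pi.single i 1) i
          ∂(Measure.pi fun _ => gaussianReal 0 v) := by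
  have hX : MemLp (fun y : Fin n → ℝ => y) 2 (Measure.pi fun _ => gaussianReal 0 v) :=
    memLp_id_pi_gaussianReal (fun _ => 0) (fun _ => v) (by norm_num)
  have hY : MemLp (fun y => c + y) 2 (Measure.pi fun _ => gaussianReal 0 v) :=
    (memLp_const c).add hX
  rw [integral_finsetSum _ fun i _ => integrable_eval_mul_eval_comp hX hY hh i,
    integral_finsetSum _ fun i _ => integrable_fderiv_apply_single_comp hY.aemeasurable hh i,
    Finset.mul_sum]
  refine Finset.sum_congr rfl fun i _ => ?_
  have hF (y : Fin n → ℝ) : HasFDerivAt (fun y => h (c + y) i)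
      ((ContinuousLinearMap.proj i).comp (fderiv ℝ h (c + y))) y :=
    hasFDerivAt_pi'.1 ((hasFDerivAt_comp_add_left c).2 (hd (c + y)).hasFDerivAt) i
  simpa using integral_eval_sub_mul_pi_gaussianReal (fun _ => 0) (fun _ => v) i hF
    (((hh.memLp_comp hY).eval i).integrable one_le_two)
    (integrable_fderiv_apply_single_comp hY.aemeasurable hh i)
    (by simpa using integrable_eval_mul_eval_comp hX hY hh i)

theorem esure_covariance_identity_general (N : ℕ) (x : Fin N → ℝ)
    (σ₁ σz : ℝ≥0)
    (h : (Fin N → ℝ) → (Fin N → ℝ)) (hdiff : ContDiff ℝ 1 h)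
    (C : ℝ) (hC : ∀ v : Fin N → ℝ, ‖fderiv ℝ h v‖ ≤ C) :
    ∫ p : (Fin N → ℝ) × (Fin N → ℝ), ∑ i, p.1 i * h (x + p.1 + p.2) i
        ∂((Measure.pi fun _ : Fin N => gaussianReal 0 (σ₁ ^ 2)).prod
            (Measure.pi fun _ : Fin N => gaussianReal 0 (σz ^ 2)))
      = (σ₁ : ℝ) ^ 2
        * ∫ p : (Fin N → ℝ) × (Fin N → ℝ),
            ∑ i, fderiv ℝ h (x + p.1 + p.2) (Pi.single i 1) i
          ∂((Measure.pi fun _ : Fin N => gaussianReal 0 (σ₁ ^ 2)).prod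
              (Measure.pi fun _ : Fin N => gaussianReal 0 (σz ^ 2))) := by
  have hd : Differentiable ℝ h := hdiff.differentiable one_ne_zero
  have hlip : LipschitzWith C.toNNReal h := lipschitzWith_of_nnnorm_fderiv_le hd fun u => by
    rw [← NNReal.coe_le_coe, coe_nnnorm]; exact (hC u).trans (Real.le_coe_toNNReal C)
  set μ₁ := Measure.pi fun _ : Fin N => gaussianReal 0 (σ₁ ^ 2)
  set μ₂ := Measure.pi fun _ : Fin N => gaussianReal 0 (σz ^ 2)
  have hX : MemLp (fun p : (Fin N → ℝ) × (Fin N → ℝ) => p.1) 2 (μ₁.prod μ₂) :=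
    (memLp_id_pi_gaussianReal _ _ (by norm_num)).comp_measurePreserving measurePreserving_fst
  have hY : MemLp (fun p : (Fin N → ℝ) × (Fin N → ℝ) => x + p.1 + p.2) 2 (μ₁.prod μ₂) :=
    ((memLp_const x).add hX).add
      ((memLp_id_pi_gaussianReal _ _ (by norm_num)).comp_measurePreserving measurePreserving_snd)
  rw [integral_prod_symm _ (integrable_finsetSum _ fun i _ =>
      integrable_eval_mul_eval_comp hX hY hlip i),
    integral_prod_symm _ (integrable_finsetSum _ fun i _ =>
      integrable_fderiv_apply_single_comp hY.aemeasurable hlip i),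
    ← integral_const_mul]
  refine integral_congr_ae (ae_of_all _ fun z => ?_)
  simp_rw [add_right_comm x _ z]
  have hstein := integral_sum_mul_pi_gaussianReal (σ₁ ^ 2) (x + z) hd hlip
  rwa [NNReal.coe_pow] at hstein

/-- Generalized Stein identity underlying eSURE: with `y₂ = x + n₁ + z`, where
`n₁ ~ N(0, σ₁²I)` and `z ~ N(0, σ_z²I)` are independent, and `h` C¹ with bounded
derivative, `E[n₁ᵀ h(y₂)] = σ₁² · E[∑ᵢ ∂hᵢ(y₂)/∂(y₂)ᵢ]`. -/
theorem esure_covariance_identity (N : ℕ) (hN : 0 < N) (x : Fin N → ℝ)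
    (σ₁ σz : ℝ≥0) (hσ₁ : 0 < σ₁)
    (h : (Fin N → ℝ) → (Fin N → ℝ)) (hdiff : ContDiff ℝ 1 h)
    (C : ℝ) (hC : ∀ v : Fin N → ℝ, ‖fderiv ℝ h v‖ ≤ C) :
    ∫ p : (Fin N → ℝ) × (Fin N → ℝ), ∑ i, p.1 i * h (x + p.1 + p.2) i
        ∂((Measure.pi fun _ : Fin N => gaussianReal 0 (σ₁ ^ 2)).prod
            (Measure.pi fun _ : Fin N => gaussianReal 0 (σz ^ 2)))
      = (σ₁ : ℝ) ^ 2
        * ∫ p : (Fin N → ℝ) × (Fin N → ℝ),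
            ∑ i, fderiv ℝ h (x + p.1 + p.2) (Pi.single i 1) i
          ∂((Measure.pi fun _ : Fin N => gaussianReal 0 (σ₁ ^ 2)).prod
              (Measure.pi fun _ : Fin N => gaussianReal 0 (σz ^ 2))) :=
  esure_covariance_identity_general N x σ₁ σz h hdiff C hC
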